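/- Let G be a cograph that is in-partitionable and such that every proper induced subgraph of G is partitionable. If G has a universal vertex v such that the graph G \ v obtained by deleting v is disconnected, then G contains one of the following graphs as an induced subgraph: H9 = K1 ⊕ (K3 ∪ (C4 ⊕ K1)), H10 = K1 ⊕ (K3 ∪ (K1 ⊕ (P3 ∪ K2))), H11 = K1 ⊕ (K3 ∪ (K2 ⊕ 2K2)), H12 = K1 ⊕ (K3 ∪ ((K2 ∪ K1) ⊕ (K2 ∪ K1))). -/

import Mathlib

open SimpleGraph

/-- The disjoint union `G ∪ H` of two vertex-disjoint graphs. -/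
def gUnion {α β : Type*} (G : SimpleGraph α) (H : SimpleGraph β) : SimpleGraph (α ⊕ β) where
  Adj x y :=
    match x, y with
    | Sum.inl a, Sum.inl b => G.Adj a b
    | Sum.inr a, Sum.inr b => H.Adj a b
    | _, _ => False
  symm := by refine ⟨?_⟩; rintro (a | a) (b | b) h
             · exact G.symm.symm _ _ h
             · exact h.elim
             · exact h.elim
             · exact H.symm.symm _ _ h
  loopless := by refine ⟨?_⟩; rintro (a | a) h
                 · exact G.loopless.irrefl a h
                 · exact H.loopless.irrefl a h

/-- The join `G ⊕ H` of two vertex-disjoint graphs: disjoint union plus all edges across. -/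
def gJoin {α β : Type*} (G : SimpleGraph α) (H : SimpleGraph β) : SimpleGraph (α ⊕ β) where
  Adj x y :=
    match x, y with
    | Sum.inl a, Sum.inl b => G.Adj a b
    | Sum.inr a, Sum.inr b => H.Adj a b
    | _, _ => True
  symm := by refine ⟨?_⟩; rintro (a | a) (b | b) h
             · exact G.symm.symm _ _ h
             · trivial
             · trivial
             · exact H.symm.symm _ _ h
  loopless := by refine ⟨?_⟩; rintro (a | a) h
                 · exact G.loopless.irrefl a h
                 · exact H.loopless.irrefl a h

/-- The complete graph `Kₙ`. -/
def KG (n : ℕ) : SimpleGraph (Fin n) := ⊤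

/-- The edgeless graph `nK₁` on `n` vertices. -/
def EG (n : ℕ) : SimpleGraph (Fin n) := ⊥

/-- `G` contains `H`, i.e. `H` is isomorphic to an induced subgraph of `G`. -/
def Contains {α β : Type*} (G : SimpleGraph α) (H : SimpleGraph β) : Prop :=
  Nonempty (H ↪g G)

/-- A cograph is a `P₄`-free graph. -/
def IsCograph {α : Type*} (G : SimpleGraph α) : Prop :=
  ¬ Contains G (pathGraph 4)

/-- `G` is partitionable: its vertex set splits into a part inducing a triangle-free
graph and a part inducing a `P₃`-free graph. -/
def Partitionable {α : Type*} (G : SimpleGraph α) : Prop :=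
  ∃ A : Set α, (G.induce A).CliqueFree 3 ∧ ¬ Contains (G.induce Aᶜ) (pathGraph 3)

/-- `G` is monopolar: its vertex set splits into an independent set and a part
inducing a `P₃`-free graph. -/
def Monopolar {α : Type*} (G : SimpleGraph α) : Prop :=
  ∃ A : Set α, (G.induce A).CliqueFree 2 ∧ ¬ Contains (G.induce Aᶜ) (pathGraph 3)

/-- `G` is (1,2)-partitionable: its vertex set can be partitioned into at most one
clique and at most two independent sets (equivalently, covered by them). -/
def OneTwoPartitionable {α : Type*} (G : SimpleGraph α) : Prop :=
  ∃ C S₁ S₂ : Set α, C ∪ S₁ ∪ S₂ = Set.univ ∧ G.IsClique C ∧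
    (G.induce S₁).CliqueFree 2 ∧ (G.induce S₂).CliqueFree 2

/-- A threshold graph is a `(2K₂, C₄, P₄)`-free graph. -/
def IsThreshold {α : Type*} (G : SimpleGraph α) : Prop :=
  ¬ Contains G (gUnion (KG 2) (KG 2)) ∧ ¬ Contains G (cycleGraph 4) ∧
    ¬ Contains G (pathGraph 4)

/-- The diamond `K₂ ⊕ 2K₁`. -/
def diamond := gJoin (KG 2) (EG 2)

/-- The paw `K₁ ⊕ (K₁ ∪ K₂)`. -/
def paw := gJoin (KG 1) (gUnion (KG 1) (KG 2))

/-- The butterfly `K₁ ⊕ 2K₂`. -/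
def butterfly := gJoin (KG 1) (gUnion (KG 2) (KG 2))

def twoK2 := gUnion (KG 2) (KG 2)

def twoK3 := gUnion (KG 3) (KG 3)

def K2uK1 := gUnion (KG 2) (KG 1)


def H1 := gJoin (EG 2) (gJoin (EG 2) (gJoin (EG 2) (KG 1)))
def H2 := gJoin (pathGraph 3) (gJoin (KG 1) twoK2)
def H3 := gJoin (EG 2) (gJoin K2uK1 K2uK1)
def H4 := gJoin (pathGraph 3) (gUnion (KG 2) (pathGraph 3))
def H5 := gJoin K2uK1 (gJoin (KG 1) twoK2)
def H6 := gJoin K2uK1 (gUnion (KG 3) (pathGraph 3))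
def H7 := gJoin K2uK1 (gUnion (KG 2) (gJoin (pathGraph 3) (KG 1)))
def H8 := gJoin K2uK1 (gUnion (KG 2) (gJoin (KG 1) K2uK1))
def H9 := gJoin (KG 1) (gUnion (KG 3) (gJoin (cycleGraph 4) (KG 1)))
def H10 := gJoin (KG 1) (gUnion (KG 3) (gJoin (KG 1) (gUnion (pathGraph 3) (KG 2))))
def H11 := gJoin (KG 1) (gUnion (KG 3) (gJoin (KG 2) twoK2))
def H12 := gJoin (KG 1) (gUnion (KG 3) (gJoin K2uK1 K2uK1))
def H13 := gJoin (KG 2) (gUnion (pathGraph 3) twoK3)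
def H14 := gJoin (KG 2) (gUnion (KG 3) (gJoin (pathGraph 3) (KG 1)))
def H15 := gJoin (KG 2) (gUnion (KG 3) (gJoin (KG 1) (gUnion (KG 1) (KG 2))))
def H16 := gJoin (gUnion (KG 3) (KG 2)) (gUnion (KG 3) (KG 1))
def H17 := gJoin (KG 3) twoK3

/-!
`G - v` is not monopolar, since an independent set together with `v` is triangle-free.
As `G - v` is disconnected, it splits into `S` and `T` with no edges between them and `T` not
monopolar. By minimality `G - S` has a partition `(B, Sᶜ \ B)`; if `v ∈ B` then `B \ {v}` is
independent (`v` is universal) and `T` would be monopolar, otherwise `(B ∪ S, Sᶜ \ B)` partitions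
`G` unless `S` contains a triangle. Finally, induction along the cotree (Seinsche: a cograph on
at least two vertices is a disjoint union or a join of smaller ones) shows that a non-monopolar
cograph contains `C₄ ⊕ K₁`, `K₁ ⊕ (P₃ ∪ K₂)`, `K₂ ⊕ 2K₂` or `(K₂ ∪ K₁) ⊕ (K₂ ∪ K₁)`; joining
`v` to the triangle in `S` and this graph in `T` gives `H₉`, `H₁₀`, `H₁₁` or `H₁₂`.
-/

section

variable {α β γ : Type*} {G : SimpleGraph α} {H : SimpleGraph β} {s t C D : Set α}

section Adjacency

variable {H₁ : SimpleGraph β} {H₂ : SimpleGraph γ}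

@[simp] theorem gJoin_adj_inl_inl {a b : β} :
    (gJoin H₁ H₂).Adj (.inl a) (.inl b) ↔ H₁.Adj a b := Iff.rfl
@[simp] theorem gJoin_adj_inr_inr {a b : γ} :
    (gJoin H₁ H₂).Adj (.inr a) (.inr b) ↔ H₂.Adj a b := Iff.rfl
@[simp] theorem gJoin_adj_inl_inr {a : β} {b : γ} : (gJoin H₁ H₂).Adj (.inl a) (.inr b) :=
  trivial
@[simp] theorem gJoin_adj_inr_inl {a : γ} {b : β} : (gJoin H₁ H₂).Adj (.inr a) (.inl b) :=
  trivial
@[simp] theorem gUnion_adj_inl_inl {a b : β} :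
    (gUnion H₁ H₂).Adj (.inl a) (.inl b) ↔ H₁.Adj a b := Iff.rfl
@[simp] theorem gUnion_adj_inr_inr {a b : γ} :
    (gUnion H₁ H₂).Adj (.inr a) (.inr b) ↔ H₂.Adj a b := Iff.rfl
@[simp] theorem gUnion_not_adj_inl_inr {a : β} {b : γ} : ¬(gUnion H₁ H₂).Adj (.inl a) (.inr b) :=
  id
@[simp] theorem gUnion_not_adj_inr_inl {a : γ} {b : β} : ¬(gUnion H₁ H₂).Adj (.inr a) (.inl b) :=
  id

theorem compl_gUnion : (gUnion H₁ H₂)ᶜ = gJoin H₁ᶜ H₂ᶜ := by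
  ext (a | a) (b | b) <;> simp [Sum.inl.injEq, Sum.inr.injEq]

theorem gJoin_preconnected [Nonempty β] [Nonempty γ] : (gJoin H₁ H₂).Preconnected := by
  have hcross : ∀ a b, (gJoin H₁ H₂).Reachable (.inl a) (.inr b) := fun _ _ =>
    gJoin_adj_inl_inr.reachable
  obtain ⟨a₀⟩ := ‹Nonempty β›
  obtain ⟨b₀⟩ := ‹Nonempty γ›
  rintro (a | a) (b | b)
  · exact (hcross a b₀).trans (hcross b b₀).symm
  · exact hcross a b
  · exact (hcross b a).symm
  · exact (hcross a₀ a).symm.trans (hcross a₀ b)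

end Adjacency

def NoEdgesBetween (G : SimpleGraph α) (s t : Set α) : Prop :=
  ∀ x ∈ s, ∀ y ∈ t, ¬G.Adj x y

def AllEdgesBetween (G : SimpleGraph α) (s t : Set α) : Prop :=
  ∀ x ∈ s, ∀ y ∈ t, G.Adj x y

theorem NoEdgesBetween.symm (h : NoEdgesBetween G s t) : NoEdgesBetween G t s :=
  fun x hx y hy hxy => h y hy x hx hxy.symm

theorem AllEdgesBetween.symm (h : AllEdgesBetween G s t) : AllEdgesBetween G t s :=
  fun x hx y hy => (h y hy x hx).symm

theorem AllEdgesBetween.noEdgesBetween_compl (h : AllEdgesBetween G s t) :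
    NoEdgesBetween Gᶜ s t :=
  fun x hx y hy hxy => (compl_adj G x y).1 hxy |>.2 (h x hx y hy)

theorem NoEdgesBetween.allEdgesBetween_compl (h : NoEdgesBetween G s t) (hst : Disjoint s t) :
    AllEdgesBetween Gᶜ s t :=
  fun x hx y hy => (compl_adj G x y).2 ⟨hst.ne_of_mem hx hy, h x hx y hy⟩

def ContainsIn (G : SimpleGraph α) (s : Set α) (H : SimpleGraph β) : Prop :=
  ∃ f : H ↪g G, ∀ x, f x ∈ s

namespace ContainsIn

theorem mono (h : ContainsIn G s H) (hst : s ⊆ t) : ContainsIn G t H :=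
  let ⟨f, hf⟩ := h
  ⟨f, fun x => hst (hf x)⟩

theorem contains (h : ContainsIn G s H) : Contains G H :=
  let ⟨f, _⟩ := h
  ⟨f⟩

theorem nontrivial [Nontrivial β] (h : ContainsIn G s H) : s.Nontrivial := by
  obtain ⟨f, hf⟩ := h
  obtain ⟨x, y, hxy⟩ := exists_pair_ne β
  exact ⟨f x, hf x, f y, hf y, f.injective.ne hxy⟩

theorem compl (h : ContainsIn G s H) : ContainsIn Gᶜ s Hᶜ :=
  let ⟨f, hf⟩ := h
  ⟨Embedding.complEquiv f, hf⟩

theorem join {H₁ : SimpleGraph β} {H₂ : SimpleGraph γ} (h₁ : ContainsIn G s H₁)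
    (h₂ : ContainsIn G t H₂) (hst : AllEdgesBetween G s t) :
    ContainsIn G (s ∪ t) (gJoin H₁ H₂) := by
  obtain ⟨f₁, hf₁⟩ := h₁
  obtain ⟨f₂, hf₂⟩ := h₂
  have hadj : ∀ a b, G.Adj (f₁ a) (f₂ b) := fun a b => hst _ (hf₁ a) _ (hf₂ b)
  refine ⟨⟨⟨Sum.elim f₁ f₂, ?_⟩, ?_⟩, ?_⟩
  · rintro (a | a) (b | b) h
    · exact congrArg _ (f₁.injective h)
    · exact absurd h (hadj a b).ne
    · exact absurd h.symm (hadj b a).ne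
    · exact congrArg _ (f₂.injective h)
  · rintro (a | a) (b | b)
    · exact f₁.map_adj_iff
    · exact iff_of_true (hadj a b) trivial
    · exact iff_of_true (hadj b a).symm trivial
    · exact f₂.map_adj_iff
  · rintro (a | a)
    exacts [Or.inl (hf₁ a), Or.inr (hf₂ a)]

theorem union {H₁ : SimpleGraph β} {H₂ : SimpleGraph γ} (h₁ : ContainsIn G s H₁)
    (h₂ : ContainsIn G t H₂) (hst : NoEdgesBetween G s t) (hdisj : Disjoint s t) :
    ContainsIn G (s ∪ t) (gUnion H₁ H₂) := by
  obtain ⟨f₁, hf₁⟩ := h₁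
  obtain ⟨f₂, hf₂⟩ := h₂
  have hnadj : ∀ a b, ¬G.Adj (f₁ a) (f₂ b) := fun a b => hst _ (hf₁ a) _ (hf₂ b)
  have hne : ∀ a b, f₁ a ≠ f₂ b := fun a b => hdisj.ne_of_mem (hf₁ a) (hf₂ b)
  refine ⟨⟨⟨Sum.elim f₁ f₂, ?_⟩, ?_⟩, ?_⟩
  · rintro (a | a) (b | b) h
    · exact congrArg _ (f₁.injective h)
    · exact absurd h (hne a b)
    · exact absurd h.symm (hne b a)
    · exact congrArg _ (f₂.injective h)
  · rintro (a | a) (b | b)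
    · exact f₁.map_adj_iff
    · exact iff_of_false (hnadj a b) id
    · exact iff_of_false (fun h => hnadj b a h.symm) id
    · exact f₂.map_adj_iff
  · rintro (a | a)
    exacts [Or.inl (hf₁ a), Or.inr (hf₂ a)]

theorem exists_of_join {H₁ : SimpleGraph β} {H₂ : SimpleGraph γ}
    (h : ContainsIn G s (gJoin H₁ H₂)) :
    ∃ s₁ ⊆ s, ∃ s₂ ⊆ s, ContainsIn G s₁ H₁ ∧ ContainsIn G s₂ H₂ ∧ AllEdgesBetween G s₁ s₂ := by
  obtain ⟨f, hf⟩ := h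
  refine ⟨Set.range (f ∘ Sum.inl), Set.range_subset_iff.2 fun _ => hf _,
    Set.range (f ∘ Sum.inr), Set.range_subset_iff.2 fun _ => hf _,
    ⟨⟨⟨f ∘ Sum.inl, f.injective.comp Sum.inl_injective⟩, f.map_adj_iff⟩, fun a => ⟨a, rfl⟩⟩,
    ⟨⟨⟨f ∘ Sum.inr, f.injective.comp Sum.inr_injective⟩, f.map_adj_iff⟩, fun a => ⟨a, rfl⟩⟩, ?_⟩
  rintro _ ⟨a, rfl⟩ _ ⟨b, rfl⟩
  exact f.map_adj_iff.2 trivial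

theorem of_union (hH : H.Preconnected) (h : ContainsIn G (C ∪ D) H)
    (hCD : NoEdgesBetween G C D) : ContainsIn G C H ∨ ContainsIn G D H := by
  obtain ⟨f, hf⟩ := h
  by_cases hC : ∃ x, f x ∈ C
  · obtain ⟨x, hx⟩ := hC
    have hwalk : ∀ {a b} (p : H.Walk a b), f a ∈ C → f b ∈ C := by
      intro a b p
      induction p with
      | nil => exact id
      | cons hab _ ih =>
        refine fun ha => ih ((hf _).resolve_right fun hb => hCD _ ha _ hb ?_)
        exact f.map_adj_iff.2 hab
    exact Or.inl ⟨f, fun y => hwalk (hH x y).some hx⟩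
  · push Not at hC
    exact Or.inr ⟨f, fun y => (hf y).resolve_left (hC y)⟩

theorem of_join (hH : Hᶜ.Preconnected) (h : ContainsIn G (C ∪ D) H)
    (hCD : AllEdgesBetween G C D) : ContainsIn G C H ∨ ContainsIn G D H := by
  have := h.compl.of_union hH hCD.noEdgesBetween_compl
  simpa only [compl_compl] using this.imp ContainsIn.compl ContainsIn.compl

end ContainsIn

theorem containsIn_of_adj_iff {f : β → α} (hf : Function.Injective f)
    (hadj : ∀ i j, G.Adj (f i) (f j) ↔ H.Adj i j) (hs : ∀ i, f i ∈ s) : ContainsIn G s H :=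
  ⟨⟨⟨f, hf⟩, hadj _ _⟩, hs⟩

theorem containsIn_KG_one_iff : ContainsIn G s (KG 1) ↔ s.Nonempty := by
  refine ⟨fun ⟨f, hf⟩ => ⟨f 0, hf 0⟩, fun ⟨x, hx⟩ => ?_⟩
  refine containsIn_of_adj_iff (f := fun _ => x) (fun i j _ => Subsingleton.elim i j) ?_ fun _ => hx
  intro i j
  simp [KG, Subsingleton.elim i j]

theorem containsIn_KG_two_iff : ContainsIn G s (KG 2) ↔ ∃ x ∈ s, ∃ y ∈ s, G.Adj x y := by
  refine ⟨fun ⟨f, hf⟩ => ⟨f 0, hf 0, f 1, hf 1, f.map_adj_iff.2 (by simp [KG])⟩, ?_⟩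
  rintro ⟨x, hx, y, hy, hxy⟩
  refine containsIn_of_adj_iff (f := ![x, y]) ?_ ?_ ?_
  · intro i j h
    fin_cases i <;> fin_cases j <;> simp_all [hxy.ne, hxy.ne.symm]
  · intro i j
    fin_cases i <;> fin_cases j <;> simp [KG, hxy, hxy.symm]
  · intro i
    fin_cases i <;> simpa

theorem containsIn_EG_two_iff :
    ContainsIn G s (EG 2) ↔ ∃ x ∈ s, ∃ y ∈ s, x ≠ y ∧ ¬G.Adj x y := by
  have hEG : EG 2 = (KG 2)ᶜ := by simp [EG, KG]
  constructor
  · rintro h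
    obtain ⟨x, hx, y, hy, hxy⟩ := containsIn_KG_two_iff.1 (by simpa [hEG] using h.compl)
    exact ⟨x, hx, y, hy, (compl_adj G x y).1 hxy⟩
  · rintro ⟨x, hx, y, hy, hxy⟩
    have := (containsIn_KG_two_iff (G := Gᶜ)).2 ⟨x, hx, y, hy, (compl_adj G x y).2 hxy⟩
    simpa [hEG] using this.compl

theorem containsIn_KG_three_iff :
    ContainsIn G s (KG 3) ↔
      ∃ x ∈ s, ∃ y ∈ s, ∃ z ∈ s, G.Adj x y ∧ G.Adj x z ∧ G.Adj y z := by
  refine ⟨fun ⟨f, hf⟩ => ⟨f 0, hf 0, f 1, hf 1, f 2, hf 2, f.map_adj_iff.2 (by simp [KG]),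
    f.map_adj_iff.2 (by simp [KG]), f.map_adj_iff.2 (by simp [KG])⟩, ?_⟩
  rintro ⟨x, hx, y, hy, z, hz, hxy, hxz, hyz⟩
  refine containsIn_of_adj_iff (f := ![x, y, z]) ?_ ?_ ?_
  · intro i j h
    fin_cases i <;> fin_cases j <;>
      simp_all [hxy.ne, hxy.ne.symm, hxz.ne, hxz.ne.symm, hyz.ne, hyz.ne.symm]
  · intro i j
    fin_cases i <;> fin_cases j <;> simp [KG, hxy, hxy.symm, hxz, hxz.symm, hyz, hyz.symm]
  · intro i
    fin_cases i <;> simpa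

theorem containsIn_pathGraph_three_iff :
    ContainsIn G s (pathGraph 3) ↔
      ∃ x ∈ s, ∃ y ∈ s, ∃ z ∈ s, G.Adj x y ∧ G.Adj y z ∧ ¬G.Adj x z ∧ x ≠ z := by
  refine ⟨fun ⟨f, hf⟩ => ⟨f 0, hf 0, f 1, hf 1, f 2, hf 2,
    f.map_adj_iff.2 (by simp [pathGraph_adj]), f.map_adj_iff.2 (by simp [pathGraph_adj]),
    fun h => by simpa [pathGraph_adj] using f.map_adj_iff.1 h, f.injective.ne (by decide)⟩, ?_⟩
  rintro ⟨x, hx, y, hy, z, hz, hxy, hyz, hxz, hne⟩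
  have hzx : ¬G.Adj z x := fun h => hxz h.symm
  refine containsIn_of_adj_iff (f := ![x, y, z]) ?_ ?_ ?_
  · intro i j h
    fin_cases i <;> fin_cases j <;>
      simp_all [hxy.ne, hxy.ne.symm, hyz.ne, hyz.ne.symm, hne.symm]
  · intro i j
    fin_cases i <;> fin_cases j <;> simp [pathGraph_adj, hxy, hxy.symm, hyz, hyz.symm, hxz, hzx]
  · intro i
    fin_cases i <;> simpa

theorem ContainsIn.cycleGraph_four_of_join (hs : ContainsIn G s (EG 2))
    (ht : ContainsIn G t (EG 2)) (hst : AllEdgesBetween G s t) :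
    ContainsIn G (s ∪ t) (cycleGraph 4) := by
  obtain ⟨x, hx, z, hz, hxz, hnxz⟩ := containsIn_EG_two_iff.1 hs
  obtain ⟨u, hu, w, hw, huw, hnuw⟩ := containsIn_EG_two_iff.1 ht
  have hzx : ¬G.Adj z x := fun h => hnxz h.symm
  have hwu : ¬G.Adj w u := fun h => hnuw h.symm
  have hxu := hst x hx u hu
  have hxw := hst x hx w hw
  have hzu := hst z hz u hu
  have hzw := hst z hz w hw
  refine containsIn_of_adj_iff (f := ![x, u, z, w]) ?_ ?_ ?_
  · intro i j h
    fin_cases i <;> fin_cases j <;>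
      simp_all [hxu.ne, hxu.ne.symm, hxw.ne, hxw.ne.symm, hzu.ne, hzu.ne.symm, hzw.ne,
        hzw.ne.symm]
  · intro i j
    fin_cases i <;> fin_cases j <;>
      simp [cycleGraph_adj, hxu, hxu.symm, hxw, hxw.symm, hzu, hzu.symm, hzw, hzw.symm,
        hnxz, hzx, hnuw, hwu] <;> decide
  · intro i
    fin_cases i <;> simp [hx, hu, hz, hw]

theorem ContainsIn.of_union_of_not_containsIn_KG_two (hH : ∀ x, ∃ y, H.Adj x y)
    (h : ContainsIn G (C ∪ D) H) (hCD : NoEdgesBetween G C D)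
    (hD : ¬ContainsIn G D (KG 2)) : ContainsIn G C H := by
  obtain ⟨f, hf⟩ := h
  refine ⟨f, fun x => (hf x).resolve_right fun hxD => ?_⟩
  obtain ⟨y, hxy⟩ := hH x
  have hadj : G.Adj (f x) (f y) := f.map_adj_iff.2 hxy
  rcases hf y with hyC | hyD
  · exact hCD _ hyC _ hxD hadj.symm
  · exact hD (containsIn_KG_two_iff.2 ⟨_, hxD, _, hyD, hadj⟩)

theorem IsCograph.adj_of_path {a b c d : α} (hG : IsCograph G) (hab : G.Adj a b)
    (hbc : G.Adj b c) (hcd : G.Adj c d) (hac : ¬G.Adj a c) (hbd : ¬G.Adj b d)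
    (hne_ac : a ≠ c) (hne_bd : b ≠ d) : G.Adj a d := by
  by_contra had
  have hne_ad : a ≠ d := by rintro rfl; exact hac hcd.symm
  have hca : ¬G.Adj c a := fun h => hac h.symm
  have hdb : ¬G.Adj d b := fun h => hbd h.symm
  have hda : ¬G.Adj d a := fun h => had h.symm
  refine hG (containsIn_of_adj_iff (s := Set.univ) (f := ![a, b, c, d]) ?_ ?_
    fun _ => trivial).contains
  · intro i j h
    fin_cases i <;> fin_cases j <;>
      simp_all [hab.ne, hab.ne.symm, hbc.ne, hbc.ne.symm, hcd.ne, hcd.ne.symm, hne_ac.symm,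
        hne_bd.symm, hne_ad.symm]
  · intro i j
    fin_cases i <;> fin_cases j <;>
      simp [pathGraph_adj, hab, hab.symm, hbc, hbc.symm, hcd, hcd.symm, hac, hca, hbd, hdb, had,
        hda]

theorem IsCograph.compl (hG : IsCograph G) : IsCograph Gᶜ := by
  rintro ⟨e⟩
  have hadj : ∀ i j, i ≠ j → (G.Adj (e i) (e j) ↔ ¬(pathGraph 4).Adj i j) := by
    intro i j hij
    have := e.injective.ne hij
    rw [← e.map_adj_iff, compl_adj]
    tauto
  have adj : ∀ i j, i ≠ j → ¬(pathGraph 4).Adj i j → G.Adj (e i) (e j) :=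
    fun i j hij h => (hadj i j hij).2 h
  have nadj : ∀ i j, i ≠ j → (pathGraph 4).Adj i j → ¬G.Adj (e i) (e j) :=
    fun i j hij h h' => (hadj i j hij).1 h' h
  -- the complement of the path `0 - 1 - 2 - 3` is the path `2 - 0 - 3 - 1`
  refine nadj 2 1 (by decide) (by simp [pathGraph_adj]) <| hG.adj_of_path
    (adj 2 0 (by decide) (by simp [pathGraph_adj])) (adj 0 3 (by decide) (by simp [pathGraph_adj]))
    (adj 3 1 (by decide) (by simp [pathGraph_adj])) (nadj 2 3 (by decide) (by simp [pathGraph_adj]))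
    (nadj 0 1 (by decide) (by simp [pathGraph_adj])) (e.injective.ne (by decide))
    (e.injective.ne (by decide))

def IsDecomposable (G : SimpleGraph α) (s : Set α) : Prop :=
  ∃ C ⊆ s, C.Nonempty ∧ (s \ C).Nonempty ∧
    (NoEdgesBetween G C (s \ C) ∨ AllEdgesBetween G C (s \ C))

theorem IsDecomposable.compl (h : IsDecomposable G s) : IsDecomposable Gᶜ s := by
  obtain ⟨C, hC, hCne, hDne, hno | hall⟩ := h
  · exact ⟨C, hC, hCne, hDne, Or.inr (hno.allEdgesBetween_compl Set.disjoint_sdiff_right)⟩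
  · exact ⟨C, hC, hCne, hDne, Or.inl hall.noEdgesBetween_compl⟩

section Insert

variable {v : α} {K K' : Set α}

theorem isDecomposable_insert_of_forall_adj (hv : v ∉ t) (ht : t.Nonempty)
    (hadj : ∀ y ∈ t, G.Adj v y) : IsDecomposable G (insert v t) := by
  refine ⟨{v}, by simp, by simp, ?_, Or.inr ?_⟩ <;>
    rw [Set.insert_sdiff_self_of_notMem hv]
  · exact ht
  · rintro x rfl y hy
    exact hadj y hy

theorem isDecomposable_insert_of_forall_not_adj (hv : v ∉ K') (hK' : K'.Nonempty)
    (hKK' : NoEdgesBetween G K K') (hvK' : ∀ y ∈ K', ¬G.Adj v y) :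
    IsDecomposable G (insert v (K ∪ K')) := by
  refine ⟨K', fun x hx => Or.inr (Or.inr hx), hK', ⟨v, Or.inl rfl, hv⟩, Or.inl ?_⟩
  rintro x hx y ⟨rfl | hyK | hyK', hy⟩ hxy
  · exact hvK' x hx hxy.symm
  · exact hKK' y hyK x hx hxy.symm
  · exact hy hyK'

/-- An edge from a non-neighbour `x ∈ K` of `v` to a neighbour `y ∈ K` of `v` would give the
induced path `x - y - v - d`. -/
theorem IsCograph.isDecomposable_insert_of_mixed (hG : IsCograph G) (hv : v ∉ K)
    (hKK' : NoEdgesBetween G K K') {d u : α} (hd : d ∈ K') (hvd : G.Adj v d) (hu : u ∈ K)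
    (hvu : ¬G.Adj v u) : IsDecomposable G (insert v (K ∪ K')) := by
  refine ⟨{x | x ∈ K ∧ ¬G.Adj v x}, fun x hx => Or.inr (Or.inl hx.1), ⟨u, hu, hvu⟩,
    ⟨v, Or.inl rfl, fun h => hv h.1⟩, Or.inl ?_⟩
  rintro x ⟨hxK, hvx⟩ y ⟨rfl | hyK | hyK', hy⟩ hxy
  · exact hvx hxy.symm
  · have hvy : G.Adj v y := by_contra fun h => hy ⟨hyK, h⟩
    have hyd : y ≠ d := by rintro rfl; exact hKK' x hxK y hd hxy
    exact hKK' x hxK d hd <| hG.adj_of_path hxy hvy.symm hvd (fun h => hvx h.symm)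
      (hKK' y hyK d hd) (by rintro rfl; exact hv hxK) hyd
  · exact hKK' x hxK y hyK' hxy

theorem IsCograph.isDecomposable_insert (hG : IsCograph G) (hvK : v ∉ K) (hvK' : v ∉ K')
    (hK : K.Nonempty) (hK' : K'.Nonempty) (hKK' : NoEdgesBetween G K K') :
    IsDecomposable G (insert v (K ∪ K')) := by
  by_cases hall : ∀ y ∈ K ∪ K', G.Adj v y
  · exact isDecomposable_insert_of_forall_adj (by simp [hvK, hvK']) (hK.mono (by simp)) hall
  push Not at hall
  wlog huK : ∃ u ∈ K, ¬G.Adj v u generalizing K K'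
  · rw [Set.union_comm] at hall ⊢
    refine this hvK' hvK hK' hK hKK'.symm hall ?_
    obtain ⟨u, hu | hu, hvu⟩ := hall
    exacts [⟨u, hu, hvu⟩, absurd ⟨u, hu, hvu⟩ huK]
  obtain ⟨u, hu, hvu⟩ := huK
  by_cases hd : ∃ d ∈ K', G.Adj v d
  · obtain ⟨d, hd, hvd⟩ := hd
    exact hG.isDecomposable_insert_of_mixed hvK hKK' hd hvd hu hvu
  · push Not at hd
    exact isDecomposable_insert_of_forall_not_adj hvK' hK' hKK' hd

end Insert

/-- Seinsche's theorem: a finite cograph on at least two vertices is disconnected or has a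
disconnected complement. -/
theorem IsCograph.isDecomposable (hG : IsCograph G) (hs : s.Finite) (hs₂ : s.Nontrivial) :
    IsDecomposable G s := by
  induction s, hs using Set.Finite.induction_on generalizing G with
  | empty => exact absurd hs₂ Set.not_nontrivial_empty
  | @insert v t hv _ ih =>
    obtain ht | ht := t.subsingleton_or_nontrivial
    · have ht' : t.Nonempty := by
        by_contra h
        simp [Set.not_nonempty_iff_eq_empty.1 h] at hs₂
      by_cases hvt : ∀ y ∈ t, G.Adj v y
      · exact isDecomposable_insert_of_forall_adj hv ht' hvt
      · push Not at hvt
        obtain ⟨u, hu, hvu⟩ := hvt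
        have := isDecomposable_insert_of_forall_not_adj (K := ∅) hv ht' (by simp [NoEdgesBetween])
          fun y hy => by rwa [ht hy hu]
        simpa using this
    · have key : ∀ G' : SimpleGraph α, IsCograph G' → ∀ C ⊆ t, C.Nonempty → (t \ C).Nonempty →
          NoEdgesBetween G' C (t \ C) → IsDecomposable G' (insert v t) := by
        intro G' hG' C hC hCne hDne hCD
        have := hG'.isDecomposable_insert (fun h => hv (hC h)) (fun h => hv h.1) hCne hDne hCD
        rwa [Set.union_sdiff_cancel hC] at this
      obtain ⟨C, hC, hCne, hDne, hno | hall⟩ := ih hG ht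
      · exact key G hG C hC hCne hDne hno
      · simpa using (key Gᶜ hG.compl C hC hCne hDne hall.noEdgesBetween_compl).compl

theorem IsCograph.induction_on [Finite α] (hG : IsCograph G) {P : Set α → Prop}
    (subsingleton : ∀ s : Set α, s.Subsingleton → P s)
    (union : ∀ C D : Set α, Disjoint C D → NoEdgesBetween G C D → P C → P D → P (C ∪ D))
    (join : ∀ C D : Set α, Disjoint C D → C.Nonempty → D.Nonempty → AllEdgesBetween G C D →
      P C → P D → P (C ∪ D))
    (s : Set α) : P s := by
  induction s using WellFoundedLT.induction with
  | _ s ih =>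
  obtain hs | hs := s.subsingleton_or_nontrivial
  · exact subsingleton s hs
  obtain ⟨C, hC, hCne, hDne, hCD⟩ := hG.isDecomposable s.toFinite hs
  have hPC := ih C ((Set.ssubset_iff_of_subset hC).2 hDne)
  have hPD := ih (s \ C) (hC.sdiff_ssubset_of_nonempty hCne)
  rw [← Set.union_sdiff_cancel hC]
  rcases hCD with hno | hall
  · exact union C (s \ C) Set.disjoint_sdiff_right hno hPC hPD
  · exact join C (s \ C) Set.disjoint_sdiff_right hCne hDne hall hPC hPD

theorem KG_preconnected (n : ℕ) : (KG n).Preconnected := preconnected_top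

theorem pathGraph_three_preconnected : (pathGraph 3).Preconnected :=
  (pathGraph_connected 2).preconnected

theorem compl_EG_two_preconnected : (EG 2)ᶜ.Preconnected := by
  simp [EG]

theorem compl_twoK2_preconnected : twoK2ᶜ.Preconnected := by
  rw [twoK2, compl_gUnion]
  exact gJoin_preconnected

theorem twoK2_exists_adj (x : Fin 2 ⊕ Fin 2) : ∃ y, twoK2.Adj x y := by
  rcases x with x | x <;> fin_cases x
  exacts [⟨.inl 1, by simp [twoK2, KG]⟩, ⟨.inl 0, by simp [twoK2, KG]⟩,
    ⟨.inr 1, by simp [twoK2, KG]⟩, ⟨.inr 0, by simp [twoK2, KG]⟩]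

theorem ContainsIn.EG_two_of_pathGraph_three (h : ContainsIn G s (pathGraph 3)) :
    ContainsIn G s (EG 2) := by
  obtain ⟨x, hx, -, -, z, hz, -, -, hxz, hne⟩ := containsIn_pathGraph_three_iff.1 h
  exact containsIn_EG_two_iff.2 ⟨x, hx, z, hz, hne, hxz⟩

theorem not_containsIn_of_subsingleton {H : SimpleGraph β} [Nontrivial β] (hs : s.Subsingleton) :
    ¬ContainsIn G s H :=
  fun h => h.nontrivial.not_subsingleton hs

def IsSplitOn (G : SimpleGraph α) (s : Set α) : Prop :=
  ∃ A ⊆ s, ¬ContainsIn G A (KG 2) ∧ ¬ContainsIn G (s \ A) (EG 2)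

def IsMonopolarOn (G : SimpleGraph α) (s : Set α) : Prop :=
  ∃ A ⊆ s, ¬ContainsIn G A (KG 2) ∧ ¬ContainsIn G (s \ A) (pathGraph 3)

theorem isSplitOn_of_subsingleton (hs : s.Subsingleton) : IsSplitOn G s :=
  ⟨∅, Set.empty_subset s, not_containsIn_of_subsingleton Set.subsingleton_empty,
    not_containsIn_of_subsingleton (hs.anti Set.sdiff_subset)⟩

theorem IsSplitOn.isMonopolarOn (h : IsSplitOn G s) : IsMonopolarOn G s :=
  let ⟨A, hA, hK, hE⟩ := h
  ⟨A, hA, hK, fun hP => hE hP.EG_two_of_pathGraph_three⟩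

theorem IsSplitOn.union_of_noEdgesBetween (hC : IsSplitOn G C) (hD : ¬ContainsIn G D (KG 2))
    (hCD : NoEdgesBetween G C D) : IsSplitOn G (C ∪ D) := by
  obtain ⟨A, hAC, hA, hCA⟩ := hC
  refine ⟨A ∪ D, Set.union_subset_union_left D hAC, fun h => ?_, fun h => hCA (h.mono ?_)⟩
  · exact (h.of_union (KG_preconnected 2) fun x hx y hy => hCD x (hAC hx) y hy).elim hA hD
  · rintro x ⟨hx | hx, hxA⟩
    exacts [⟨hx, fun h => hxA (Or.inl h)⟩, absurd (Or.inr hx) hxA]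

theorem IsSplitOn.union_of_allEdgesBetween (hC : IsSplitOn G C) (hD : ¬ContainsIn G D (EG 2))
    (hCD : AllEdgesBetween G C D) : IsSplitOn G (C ∪ D) := by
  obtain ⟨A, hAC, hA, hCA⟩ := hC
  refine ⟨A, hAC.trans Set.subset_union_left, hA, fun h => ?_⟩
  have h' : ContainsIn G ((C \ A) ∪ D) (EG 2) := h.mono fun x ⟨hx, hxA⟩ =>
    hx.imp (fun hx => ⟨hx, hxA⟩) id
  exact (h'.of_join compl_EG_two_preconnected fun x hx y hy => hCD x hx.1 y hy).elim hCA hD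

theorem IsCograph.isSplitOn_or [Finite α] (hG : IsCograph G) (s : Set α) :
    IsSplitOn G s ∨ ContainsIn G s twoK2 ∨ ContainsIn G s (cycleGraph 4) := by
  induction s using hG.induction_on with
  | subsingleton s hs => exact Or.inl (isSplitOn_of_subsingleton hs)
  | union C D hdisj hCD hC hD =>
    by_cases hK : ContainsIn G C (KG 2) ∧ ContainsIn G D (KG 2)
    · exact Or.inr (Or.inl (hK.1.union hK.2 hCD hdisj))
    wlog hD' : ¬ContainsIn G D (KG 2) generalizing C D
    · rw [Set.union_comm]
      exact this D C hdisj.symm hCD.symm hD hC (by tauto) (by tauto)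
    rcases hC with hC | hC | hC
    · exact Or.inl (hC.union_of_noEdgesBetween hD' hCD)
    · exact Or.inr (Or.inl (hC.mono Set.subset_union_left))
    · exact Or.inr (Or.inr (hC.mono Set.subset_union_left))
  | join C D hdisj hCne hDne hCD hC hD =>
    by_cases hE : ContainsIn G C (EG 2) ∧ ContainsIn G D (EG 2)
    · exact Or.inr (Or.inr (hE.1.cycleGraph_four_of_join hE.2 hCD))
    wlog hD' : ¬ContainsIn G D (EG 2) generalizing C D
    · rw [Set.union_comm]
      exact this D C hdisj.symm hDne hCne hCD.symm hD hC (by tauto) (by tauto)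
    rcases hC with hC | hC | hC
    · exact Or.inl (hC.union_of_allEdgesBetween hD' hCD)
    · exact Or.inr (Or.inl (hC.mono Set.subset_union_left))
    · exact Or.inr (Or.inr (hC.mono Set.subset_union_left))

theorem IsCograph.containsIn_pathGraph_three_union_or_butterfly [Finite α] (hG : IsCograph G)
    (s : Set α) (h2K2 : ContainsIn G s twoK2) (hP3 : ContainsIn G s (pathGraph 3)) :
    ContainsIn G s (gUnion (pathGraph 3) (KG 2)) ∨ ContainsIn G s butterfly := by
  induction s using hG.induction_on with
  | subsingleton s hs => exact absurd hP3 (not_containsIn_of_subsingleton hs)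
  | union C D hdisj hCD hC hD =>
    wlog hP3C : ContainsIn G C (pathGraph 3) generalizing C D
    · rw [Set.union_comm] at h2K2 hP3 ⊢
      refine this D C hdisj.symm hCD.symm hD hC h2K2 hP3 ?_
      exact (hP3.of_union pathGraph_three_preconnected hCD.symm).resolve_right hP3C
    by_cases hK : ContainsIn G D (KG 2)
    · exact Or.inl (hP3C.union hK hCD hdisj)
    have h2K2C := h2K2.of_union_of_not_containsIn_KG_two twoK2_exists_adj hCD hK
    exact (hC h2K2C hP3C).imp (·.mono Set.subset_union_left) (·.mono Set.subset_union_left)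
  | join C D hdisj hCne hDne hCD hC hD =>
    clear hC hD
    wlog h2K2C : ContainsIn G C twoK2 generalizing C D
    · rw [Set.union_comm] at h2K2 hP3 ⊢
      refine this D C hdisj.symm hDne hCne hCD.symm h2K2 hP3 ?_
      exact (h2K2.of_join compl_twoK2_preconnected hCD.symm).resolve_right h2K2C
    rw [Set.union_comm]
    exact Or.inr ((containsIn_KG_one_iff.2 hDne).join h2K2C hCD.symm)

theorem isMonopolarOn_of_subsingleton (hs : s.Subsingleton) : IsMonopolarOn G s :=
  (isSplitOn_of_subsingleton hs).isMonopolarOn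

theorem IsMonopolarOn.union (hC : IsMonopolarOn G C) (hD : IsMonopolarOn G D)
    (hCD : NoEdgesBetween G C D) : IsMonopolarOn G (C ∪ D) := by
  obtain ⟨A, hAC, hA, hCA⟩ := hC
  obtain ⟨B, hBD, hB, hDB⟩ := hD
  refine ⟨A ∪ B, Set.union_subset_union hAC hBD, fun h => ?_, fun h => ?_⟩
  · exact (h.of_union (KG_preconnected 2) fun x hx y hy => hCD x (hAC hx) y (hBD hy)).elim hA hB
  · have h' : ContainsIn G ((C \ A) ∪ (D \ B)) (pathGraph 3) := h.mono fun x ⟨hx, hxAB⟩ =>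
      hx.imp (fun hx => ⟨hx, fun h => hxAB (Or.inl h)⟩) fun hx => ⟨hx, fun h => hxAB (Or.inr h)⟩
    exact (h'.of_union pathGraph_three_preconnected fun x hx y hy => hCD x hx.1 y hy.1).elim hCA hDB

theorem isMonopolarOn_union_of_not_containsIn (hC : ¬ContainsIn G C (KG 2))
    (hD : ¬ContainsIn G D (pathGraph 3)) : IsMonopolarOn G (C ∪ D) :=
  ⟨C, Set.subset_union_left, hC, fun h => hD <| h.mono fun _ ⟨hx, hxC⟩ => hx.resolve_left hxC⟩

def HasMonopolarObstruction (G : SimpleGraph α) (s : Set α) : Prop :=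
  ContainsIn G s (gJoin (cycleGraph 4) (KG 1)) ∨
    ContainsIn G s (gJoin (KG 1) (gUnion (pathGraph 3) (KG 2))) ∨
    ContainsIn G s (gJoin (KG 2) twoK2) ∨ ContainsIn G s (gJoin K2uK1 K2uK1)

theorem HasMonopolarObstruction.mono (h : HasMonopolarObstruction G s) (hst : s ⊆ t) :
    HasMonopolarObstruction G t :=
  h.imp (·.mono hst) <| Or.imp (·.mono hst) <| Or.imp (·.mono hst) (·.mono hst)

theorem adj_of_not_containsIn_pathGraph_three (hs : ¬ContainsIn G s (pathGraph 3)) ⦃x y z : α⦄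
    (hx : x ∈ s) (hy : y ∈ s) (hz : z ∈ s) (hxy : G.Adj x y) (hyz : G.Adj y z) (hxz : x ≠ z) :
    G.Adj x z :=
  by_contra fun h => hs (containsIn_pathGraph_three_iff.2 ⟨x, hx, y, hy, z, hz, hxy, hyz, h, hxz⟩)

theorem containsIn_K2uK1_of_not_containsIn_pathGraph_three (hs : ¬ContainsIn G s (pathGraph 3))
    (hK : ContainsIn G s (KG 2)) (hE : ContainsIn G s (EG 2)) : ContainsIn G s K2uK1 := by
  obtain ⟨a, ha, b, hb, hab⟩ := containsIn_KG_two_iff.1 hK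
  obtain ⟨u, hu, w, hw, huw, hnuw⟩ := containsIn_EG_two_iff.1 hE
  have htrans := adj_of_not_containsIn_pathGraph_three hs
  have hattach : ∀ x ∈ s, x = a ∨ x = b ∨ G.Adj x a ∨ G.Adj x b → x = a ∨ G.Adj x a := by
    rintro x hx (rfl | rfl | hxa | hxb)
    · exact Or.inl rfl
    · exact Or.inr hab.symm
    · exact Or.inr hxa
    · exact or_iff_not_imp_left.2 (htrans hx hb ha hxb hab.symm)
  -- `u` and `w` are not adjacent, so they cannot both lie in the clique of `a`
  obtain ⟨x, hx, hxab⟩ : ∃ x ∈ s, ¬(x = a ∨ x = b ∨ G.Adj x a ∨ G.Adj x b) := by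
    by_contra! hnone
    rcases hattach u hu (hnone u hu) with rfl | hua <;>
      rcases hattach w hw (hnone w hw) with rfl | hwa
    · exact huw rfl
    · exact hnuw hwa.symm
    · exact hnuw hua
    · exact hnuw (htrans hu ha hw hua hwa.symm huw)
  push Not at hxab
  obtain ⟨hxa, hxb, hnxa, hnxb⟩ := hxab
  have hab' : ContainsIn G {a, b} (KG 2) := containsIn_KG_two_iff.2 ⟨a, by simp, b, by simp, hab⟩
  refine (hab'.union (containsIn_KG_one_iff.2 (Set.singleton_nonempty x)) ?_ ?_).mono ?_
  · rintro y (rfl | rfl) z rfl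
    exacts [fun h => hnxa h.symm, fun h => hnxb h.symm]
  · simpa using ⟨hxa, hxb⟩
  · simp [Set.insert_subset_iff, ha, hb, hx]

theorem ContainsIn.wheel_of_join (hC : ContainsIn G C (pathGraph 3)) (hD : ContainsIn G D (EG 2))
    (hCD : AllEdgesBetween G C D) : ContainsIn G (C ∪ D) (gJoin (cycleGraph 4) (KG 1)) := by
  obtain ⟨x, hx, y, hy, z, hz, hxy, hyz, hxz, hne⟩ := containsIn_pathGraph_three_iff.1 hC
  have hxzC : ({x, z} : Set α) ⊆ C := by simp [Set.insert_subset_iff, hx, hz]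
  have hC4 := (containsIn_EG_two_iff.2 ⟨x, by simp, z, by simp, hne, hxz⟩).cycleGraph_four_of_join
    hD fun a ha b hb => hCD a (hxzC ha) b hb
  refine (hC4.join (containsIn_KG_one_iff.2 (Set.singleton_nonempty y)) ?_).mono ?_
  · rintro a ((rfl | rfl) | ha) b rfl
    exacts [hxy, hyz.symm, (hCD b hy a ha).symm]
  · exact Set.union_subset (Set.union_subset_union_left D hxzC) (by simp [hy])

theorem IsCograph.hasMonopolarObstruction_of_join_clique [Finite α] (hG : IsCograph G)
    {P Q : Set α} (hPQ : AllEdgesBetween G P Q) (hQ : Q.Nonempty) (hQc : ¬ContainsIn G Q (EG 2))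
    (hm : ¬IsMonopolarOn G (P ∪ Q)) : HasMonopolarObstruction G (P ∪ Q) := by
  obtain ⟨q, hq⟩ := hQ
  have hq' : ContainsIn G {q} (KG 1) := containsIn_KG_one_iff.2 (Set.singleton_nonempty q)
  have hPq : AllEdgesBetween G P {q} := fun x hx y hy => by
    rw [Set.mem_singleton_iff.1 hy]
    exact hPQ x hx q hq
  have hqP : {q} ∪ P ⊆ P ∪ Q := by simp [Set.insert_subset_iff, hq]
  rcases hG.isSplitOn_or P with hsplit | h2K2 | hC4
  · exact absurd (hsplit.union_of_allEdgesBetween hQc hPQ).isMonopolarOn hm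
  · by_cases hK : ContainsIn G Q (KG 2)
    · rw [Set.union_comm]
      exact Or.inr (Or.inr (Or.inl (hK.join h2K2 hPQ.symm)))
    have hP3 : ContainsIn G P (pathGraph 3) := by
      by_contra hP3
      rw [Set.union_comm] at hm
      exact hm (isMonopolarOn_union_of_not_containsIn hK hP3)
    rcases hG.containsIn_pathGraph_three_union_or_butterfly P h2K2 hP3 with h | h
    · exact Or.inr (Or.inl ((hq'.join h hPq.symm).mono hqP))
    · obtain ⟨s₁, hs₁, s₂, hs₂, h₁, h₂, h₁₂⟩ := h.exists_of_join
      obtain ⟨p, hp⟩ := containsIn_KG_one_iff.1 h₁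
      -- `q` and the centre `p` of the butterfly span the `K₂` of `K₂ ⊕ 2K₂`
      have hqp : ContainsIn G {q, p} (KG 2) :=
        containsIn_KG_two_iff.2 ⟨q, by simp, p, by simp, (hPQ p (hs₁ hp) q hq).symm⟩
      refine Or.inr (Or.inr (Or.inl ((hqp.join h₂ ?_).mono ?_)))
      · rintro x (rfl | rfl) y hy
        exacts [(hPQ y (hs₂ hy) x hq).symm, h₁₂ x hp y hy]
      · exact Set.union_subset (by simp [Set.insert_subset_iff, hq, hs₁ hp])
          (hs₂.trans Set.subset_union_left)
  · exact Or.inl ((hC4.join hq' hPq).mono (Set.union_comm P {q} ▸ hqP))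

theorem IsCograph.hasMonopolarObstruction_of_join [Finite α] (hG : IsCograph G)
    (hCD : AllEdgesBetween G C D) (hC : C.Nonempty) (hD : D.Nonempty)
    (hm : ¬IsMonopolarOn G (C ∪ D)) : HasMonopolarObstruction G (C ∪ D) := by
  by_cases hDc : ContainsIn G D (EG 2)
  swap
  · exact hG.hasMonopolarObstruction_of_join_clique hCD hD hDc hm
  by_cases hCc : ContainsIn G C (EG 2)
  swap
  · rw [Set.union_comm] at hm ⊢
    exact hG.hasMonopolarObstruction_of_join_clique hCD.symm hC hCc hm
  by_cases hPC : ContainsIn G C (pathGraph 3)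
  · exact Or.inl (hPC.wheel_of_join hDc hCD)
  by_cases hPD : ContainsIn G D (pathGraph 3)
  · rw [Set.union_comm]
    exact Or.inl (hPD.wheel_of_join hCc hCD.symm)
  have hKC : ContainsIn G C (KG 2) :=
    by_contra fun h => hm (isMonopolarOn_union_of_not_containsIn h hPD)
  have hKD : ContainsIn G D (KG 2) :=
    by_contra fun h => hm (Set.union_comm D C ▸ isMonopolarOn_union_of_not_containsIn h hPC)
  exact Or.inr (Or.inr (Or.inr
    ((containsIn_K2uK1_of_not_containsIn_pathGraph_three hPC hKC hCc).join
      (containsIn_K2uK1_of_not_containsIn_pathGraph_three hPD hKD hDc) hCD)))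

theorem IsCograph.isMonopolarOn_or_hasMonopolarObstruction [Finite α] (hG : IsCograph G)
    (s : Set α) : IsMonopolarOn G s ∨ HasMonopolarObstruction G s := by
  induction s using hG.induction_on with
  | subsingleton s hs => exact Or.inl (isMonopolarOn_of_subsingleton hs)
  | union C D _ hCD hC hD =>
    rcases hC with hC | hC
    · exact hD.imp (hC.union · hCD) (·.mono Set.subset_union_right)
    · exact Or.inr (hC.mono Set.subset_union_left)
  | join C D _ hCne hDne hCD _ _ =>
    exact or_iff_not_imp_left.2 (hG.hasMonopolarObstruction_of_join hCD hCne hDne)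

theorem containsIn_induce_iff {A : Set s} :
    ContainsIn (G.induce s) A H ↔ ContainsIn G (Subtype.val '' A) H := by
  constructor
  · rintro ⟨f, hf⟩
    exact ⟨(Embedding.induce s).comp f, fun x => ⟨f x, hf x, rfl⟩⟩
  · rintro ⟨f, hf⟩
    choose a ha hfa using hf
    refine ⟨⟨⟨a, fun x y h => f.injective (by rw [← hfa, ← hfa, h])⟩, ?_⟩, ha⟩
    intro x y
    change G.Adj (a x : α) (a y) ↔ H.Adj x y
    rw [hfa, hfa]
    exact f.map_adj_iff

theorem contains_induce_iff : Contains (G.induce s) H ↔ ContainsIn G s H := by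
  have := containsIn_induce_iff (G := G) (H := H) (s := s) (A := Set.univ)
  rw [Subtype.coe_image_univ] at this
  rw [← this]
  exact ⟨fun ⟨f⟩ => ⟨f, fun _ => trivial⟩, ContainsIn.contains⟩

theorem cliqueFree_iff_not_contains_KG {n : ℕ} : G.CliqueFree n ↔ ¬Contains G (KG n) := by
  rw [← not_iff_not, not_not, not_cliqueFree_iff_top_isContained]
  exact ⟨fun ⟨f⟩ => ⟨f.topEmbedding⟩, fun ⟨f⟩ => ⟨f.toCopy⟩⟩

theorem partitionable_iff :
    Partitionable G ↔ ∃ A, ¬ContainsIn G A (KG 3) ∧ ¬ContainsIn G Aᶜ (pathGraph 3) := by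
  simp only [_root_.Partitionable, cliqueFree_iff_not_contains_KG, contains_induce_iff]

theorem Partitionable.exists_of_induce (h : Partitionable (G.induce s)) :
    ∃ B ⊆ s, ¬ContainsIn G B (KG 3) ∧ ¬ContainsIn G (s \ B) (pathGraph 3) := by
  obtain ⟨A, hA, hAc⟩ := partitionable_iff.1 h
  rw [containsIn_induce_iff] at hA hAc
  exact ⟨Subtype.val '' A, Subtype.coe_image_subset s A, hA, Set.image_val_compl ▸ hAc⟩

theorem partitionable_of_isMonopolarOn_compl_singleton {v : α} (h : IsMonopolarOn G {v}ᶜ) :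
    Partitionable G := by
  obtain ⟨A, -, hA, hvA⟩ := h
  refine partitionable_iff.2 ⟨insert v A, fun h3 => hA ?_, ?_⟩
  · -- two of the three triangle vertices differ from `v`, hence lie in `A`
    obtain ⟨x, hx, y, hy, z, hz, hxy, hxz, hyz⟩ := containsIn_KG_three_iff.1 h3
    refine containsIn_KG_two_iff.2 ?_
    by_cases hxv : x = v
    · subst hxv
      exact ⟨y, hy.resolve_left hxy.ne.symm, z, hz.resolve_left hxz.ne.symm, hyz⟩
    by_cases hyv : y = v
    · subst hyv
      exact ⟨x, hx.resolve_left hxv, z, hz.resolve_left hyz.ne.symm, hxz⟩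
    · exact ⟨x, hx.resolve_left hxv, y, hy.resolve_left hyv, hxy⟩
  · convert hvA using 2
    ext x
    simp only [Set.mem_compl_iff, Set.mem_insert_iff, not_or, Set.mem_sdiff,
      Set.mem_singleton_iff]

theorem containsIn_KG_three_of_not_partitionable {v : α} {S T : Set α}
    (hv : ∀ w, w ≠ v → G.Adj v w) (hnp : ¬Partitionable G) (hpart : Partitionable (G.induce Sᶜ))
    (hST : S ∪ T = {v}ᶜ) (hdisj : Disjoint S T) (hno : NoEdgesBetween G S T)
    (hT : ¬IsMonopolarOn G T) : ContainsIn G S (KG 3) := by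
  have hvT : v ∉ T := fun h => (hST ▸ Set.mem_union_right S h : v ∈ ({v}ᶜ : Set α)) rfl
  have hSc : Sᶜ = insert v T := by
    ext x
    have := congrArg (x ∈ ·) hST
    simp only [Set.mem_union, Set.mem_compl_iff, Set.mem_singleton_iff, eq_iff_iff] at this
    have := hdisj.notMem_of_mem_right (a := x)
    simp only [Set.mem_compl_iff, Set.mem_insert_iff]
    tauto
  obtain ⟨B, hBS, hB, hSB⟩ := hpart.exists_of_induce
  have hBT : B \ {v} ⊆ T := fun x ⟨hxB, hxv⟩ => (hSc ▸ hBS hxB).resolve_left hxv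
  by_cases hvB : v ∈ B
  · -- `B \ {v}` is independent and `T \ (B \ {v}) ⊆ Sᶜ \ B`, so `T` would be monopolar
    refine absurd ⟨B \ {v}, hBT, fun h2 => hB ?_, fun h => hSB (h.mono ?_)⟩ hT
    · obtain ⟨x, hx, y, hy, hxy⟩ := containsIn_KG_two_iff.1 h2
      exact containsIn_KG_three_iff.2 ⟨v, hvB, x, hx.1, y, hy.1, hv x hx.2, hv y hy.2, hxy⟩
    · rintro x ⟨hxT, hxB⟩
      exact ⟨hSc ▸ Or.inr hxT, fun h => hxB ⟨h, fun hxv => hvT (hxv ▸ hxT)⟩⟩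
  · -- otherwise `B ∪ S`, `Sᶜ \ B` partitions `G`
    by_contra hS
    have hBT' : B ⊆ T := fun x hx => hBT ⟨hx, fun hxv => hvB (hxv ▸ hx)⟩
    refine hnp (partitionable_iff.2 ⟨B ∪ S, fun h => ?_, ?_⟩)
    · refine (h.of_union (KG_preconnected 3) ?_).elim hB hS
      exact fun x hx y hy h => hno y hy x (hBT' hx) h.symm
    · rwa [Set.compl_union, Set.inter_comm]

theorem exists_noEdgesBetween_of_not_connected (h : ¬(G.induce s).Connected) (hs : s.Nonempty) :
    ∃ C ⊆ s, C.Nonempty ∧ (s \ C).Nonempty ∧ NoEdgesBetween G C (s \ C) := by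
  obtain ⟨x, hx⟩ := hs
  let C := {y | ∃ hy : y ∈ s, (G.induce s).Reachable ⟨x, hx⟩ ⟨y, hy⟩}
  refine ⟨C, fun y hy => hy.1, ⟨x, hx, .rfl⟩, ?_, ?_⟩
  · by_contra hD
    refine h ((connected_iff_exists_forall_reachable _).2 ⟨⟨x, hx⟩, fun ⟨y, hy⟩ => ?_⟩)
    obtain ⟨_, hxy⟩ := not_not.1 fun hyC => hD ⟨y, hy, hyC⟩
    exact hxy
  · rintro y ⟨hy, hxy⟩ z ⟨hz, hzC⟩ hyz
    exact hzC ⟨hz, hxy.trans (Adj.reachable (G := G.induce s) (u := ⟨y, hy⟩) (v := ⟨z, hz⟩) hyz)⟩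

end

theorem stmt_17 {α : Type*} [Fintype α] (G : SimpleGraph α) (hcog : IsCograph G)
    (hnp : ¬ Partitionable G)
    (hmin : ∀ A : Set α, A ≠ Set.univ → Partitionable (G.induce A))
    (v : α) (hv : ∀ w, w ≠ v → G.Adj v w)
    (hdisc : ¬ (G.induce ({v}ᶜ : Set α)).Connected) :
    Contains G H9 ∨ Contains G H10 ∨ Contains G H11 ∨ Contains G H12 := by
  have hW : ¬IsMonopolarOn G {v}ᶜ := fun h => hnp (partitionable_of_isMonopolarOn_compl_singleton h)
  have hWne : ({v}ᶜ : Set α).Nonempty := Set.nonempty_iff_ne_empty.2 fun h =>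
    hW (h ▸ isMonopolarOn_of_subsingleton Set.subsingleton_empty)
  obtain ⟨C, hC, hCne, hDne, hCD⟩ := exists_noEdgesBetween_of_not_connected hdisc hWne
  obtain ⟨S, T, hST, hdisj, hno, hS, hT⟩ : ∃ S T : Set α, S ∪ T = {v}ᶜ ∧ Disjoint S T ∧
      NoEdgesBetween G S T ∧ S.Nonempty ∧ ¬IsMonopolarOn G T := by
    by_cases hCm : IsMonopolarOn G C
    · exact ⟨C, {v}ᶜ \ C, Set.union_sdiff_cancel hC, Set.disjoint_sdiff_right, hCD, hCne,
        fun hDm => hW (Set.union_sdiff_cancel hC ▸ hCm.union hDm hCD)⟩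
    · exact ⟨{v}ᶜ \ C, C, by rw [Set.union_comm, Set.union_sdiff_cancel hC],
        Set.disjoint_sdiff_left, hCD.symm, hDne, hCm⟩
  have hK3 := containsIn_KG_three_of_not_partitionable hv hnp
    (hmin Sᶜ fun h => hS.ne_empty (Set.compl_univ_iff.1 h)) hST hdisj hno hT
  have hvST : AllEdgesBetween G {v} (S ∪ T) := by
    intro x hx y hy
    rw [Set.mem_singleton_iff.1 hx]
    exact hv y (Set.mem_compl_singleton_iff.1 (hST ▸ hy))
  have hH : ∀ {β : Type} {X : SimpleGraph β}, ContainsIn G T X →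
      Contains G (gJoin (KG 1) (gUnion (KG 3) X)) := fun hX =>
    ((containsIn_KG_one_iff.2 (Set.singleton_nonempty v)).join (hK3.union hX hno hdisj)
      hvST).contains
  rcases (hcog.isMonopolarOn_or_hasMonopolarObstruction T).resolve_left hT with h | h | h | h
  exacts [Or.inl (hH h), Or.inr (Or.inl (hH h)), Or.inr (Or.inr (Or.inl (hH h))),
    Or.inr (Or.inr (Or.inr (hH h)))]
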